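/- Let B be the circumscribed bundle of PG(2,q) invariant under a Singer cyclic group S, and let b be an S-orbit of bi-lines of PG(2,q). Then the incidence structure whose points are the q^2+q+1 bi-lines of b and whose lines are the q^2+q+1 conics of B, with a bi-line incident to a conic when its center (the intersection point of its two lines) lies on the conic, is a projective plane of order q. -/

import Mathlib

/-- Evaluation of the ternary quadratic form with coefficient vector
`a = (a11,a22,a33,a12,a13,a23)` at `x = (x1,x2,x3)`. -/
def Qeval {F : Type*} [CommRing F] (a : Fin 6 → F) (x : Fin 3 → F) : F :=
  a 0 * x 0 ^ 2 + a 1 * x 1 ^ 2 + a 2 * x 2 ^ 2 +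
    a 3 * x 0 * x 1 + a 4 * x 0 * x 2 + a 5 * x 1 * x 2

/-- A ternary quadratic form is degenerate if it factors into a product of
two linear forms over the algebraic closure. -/
def IsDegenerateBar (F : Type*) [Field F] (a : Fin 6 → F) : Prop :=
  ∃ u v : Fin 3 → AlgebraicClosure F, ∀ x : Fin 3 → AlgebraicClosure F,
    Qeval (fun i => algebraMap F (AlgebraicClosure F) (a i)) x =
      (∑ i, u i * x i) * (∑ i, v i * x i)

section

variable {F : Type*} [Field F]

/-- Incidence between a line (a point of the dual plane, with coefficient
vector `u`) and a point (with coordinate vector `w`) of PG(2,q). -/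
def IncPL (l p : Projectivization F (Fin 3 → F)) : Prop :=
  ∃ (u : Fin 3 → F) (hu : u ≠ 0) (w : Fin 3 → F) (hw : w ≠ 0),
    l = Projectivization.mk F u hu ∧ p = Projectivization.mk F w hw ∧
      ∑ i, u i * w i = 0

/-- The point `p` of PG(2,q) lies on the quadric `c` (a point of PG(5,q)
regarded as a quadric of PG(2,q)). -/
def VanishC (c : Projectivization F (Fin 6 → F))
    (p : Projectivization F (Fin 3 → F)) : Prop :=
  ∃ (a : Fin 6 → F) (ha : a ≠ 0) (w : Fin 3 → F) (hw : w ≠ 0),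
    c = Projectivization.mk F a ha ∧ p = Projectivization.mk F w hw ∧
      Qeval a w = 0

/-- `c` is a (nondegenerate) conic of PG(2,q). -/
def ConicC (c : Projectivization F (Fin 6 → F)) : Prop :=
  ∃ (a : Fin 6 → F) (ha : a ≠ 0), c = Projectivization.mk F a ha ∧
    ¬ IsDegenerateBar F a

/-- A bi-line `bl` (a pair of distinct lines) is incident with the quadric
`c` when the common point of its lines (its center) lies on `c`. -/
def IncBC (bl : Finset (Projectivization F (Fin 3 → F)))
    (c : Projectivization F (Fin 6 → F)) : Prop :=
  ∃ p : Projectivization F (Fin 3 → F),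
    (∀ l ∈ bl, IncPL l p) ∧ VanishC c p

end

/-!
Two distinct lines of `PG(2,F)` meet in exactly one point, so a bi-line has a well-defined
center, and its incidence with a conic only depends on that center. The center map commutes with
the Singer cycle; a power of the Singer cycle fixing one point is the identity, and then it also
fixes every line, so the center map is injective on the orbit `b` and hence a bijection onto the
`q² + q + 1` points. It therefore suffices that the points and the conics of `B` form a projective
plane of order `q`. By transitivity all conics of `B` have equally many points, and double
counting makes this number `q + 1`. The `q + 1` conics through a point `p` then cover the other
`(q + 1) q` points, each exactly once, so any two points lie on a common conic of `B`.
-/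

open Function Projectivization
open scoped LinearAlgebra.Projectivization

namespace Function

variable {α β : Type*}

theorem iterate_rel_iff {R : α → β → Prop} {f : α → α} {g : β → β}
    (h : ∀ a b, R (f a) (g b) ↔ R a b) (k : ℕ) (a : α) (b : β) :
    R (f^[k] a) (g^[k] b) ↔ R a b := by
  induction k generalizing a b with
  | zero => rfl
  | succ k ih => rw [iterate_succ_apply, iterate_succ_apply, ih, h]

def IsRegularCycle (f : α → α) (n : ℕ) : Prop :=
  ∀ x y, ∃! k, k < n ∧ f^[k] x = y

namespace IsRegularCycle

variable {f : α → α} {n : ℕ}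

theorem eq_zero_of_iterate_eq_self (hf : IsRegularCycle f n) {k : ℕ} {x : α} (hk : k < n)
    (hx : f^[k] x = x) : k = 0 :=
  (hf x x).unique ⟨hk, hx⟩ ⟨by omega, rfl⟩

theorem iterate_eq_id (hf : IsRegularCycle f n) {k : ℕ} {x : α} (hx : f^[k] x = x) :
    f^[k] = id := by
  funext y
  obtain ⟨j, ⟨-, rfl⟩, -⟩ := hf x y
  rw [id, (Commute.iterate_iterate_self f k j).eq, hx]

theorem injective (hf : IsRegularCycle f n) : Injective f := by
  intro x y hxy
  obtain ⟨j, ⟨hj, rfl⟩, -⟩ := hf x y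
  have : f^[j] (f x) = f x := by rw [← iterate_succ_apply, iterate_succ_apply', hxy]
  rw [hf.eq_zero_of_iterate_eq_self hj this, iterate_zero_apply]

theorem natCard_eq [Nonempty α] (hf : IsRegularCycle f n) : Nat.card α = n := by
  obtain ⟨x⟩ := ‹Nonempty α›
  refine (Nat.card_eq_of_bijective (fun k : Fin n => f^[k] x) ⟨?_, ?_⟩).symm.trans
    (Nat.card_eq_fintype_card.trans (Fintype.card_fin n))
  · intro i j hij
    wlog hle : i ≤ j generalizing i j
    · exact (this hij.symm (le_of_not_ge hle)).symm
    have hfix : f^[(j : ℕ) - i] (f^[i] x) = f^[i] x := by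
      rw [← iterate_add_apply, Nat.sub_add_cancel hle]; exact hij.symm
    have := hf.eq_zero_of_iterate_eq_self (by omega) hfix
    exact Fin.ext (by omega)
  · intro y
    obtain ⟨k, ⟨hk, rfl⟩, -⟩ := hf x y
    exact ⟨⟨k, hk⟩, rfl⟩

theorem finite [Nonempty α] (hf : IsRegularCycle f n) : Finite α := by
  obtain ⟨x⟩ := ‹Nonempty α›
  obtain ⟨k, ⟨hk, -⟩, -⟩ := hf x x
  exact Nat.finite_of_card_ne_zero (by rw [hf.natCard_eq]; omega)

theorem bijective [Nonempty α] (hf : IsRegularCycle f n) : Bijective f :=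
  have := hf.finite
  Finite.injective_iff_bijective.mp hf.injective

end IsRegularCycle

end Function

def IsProjectivePlaneOfOrder {P L : Type*} (pts : Set P) (lns : Set L) (I : P → L → Prop)
    (q : ℕ) : Prop :=
  (∀ p ∈ pts, Nat.card {l // l ∈ lns ∧ I p l} = q + 1) ∧
  (∀ l ∈ lns, Nat.card {p // p ∈ pts ∧ I p l} = q + 1) ∧
  (∀ p₁ ∈ pts, ∀ p₂ ∈ pts, p₁ ≠ p₂ → ∃! l, l ∈ lns ∧ I p₁ l ∧ I p₂ l) ∧
  (∀ l₁ ∈ lns, ∀ l₂ ∈ lns, l₁ ≠ l₂ → ∃! p, p ∈ pts ∧ I p l₁ ∧ I p l₂)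

theorem IsProjectivePlaneOfOrder.comap {P P' L : Type*} {pts : Set P} {pts' : Set P'}
    {lns : Set L} {I : P → L → Prop} {I' : P' → L → Prop} {q : ℕ} {f : P' → P}
    (h : IsProjectivePlaneOfOrder pts lns I q) (hf : Set.BijOn f pts' pts)
    (hI : ∀ p ∈ pts', ∀ l, I' p l ↔ I (f p) l) : IsProjectivePlaneOfOrder pts' lns I' q := by
  obtain ⟨hpt, hln, hpp, hll⟩ := h
  refine ⟨fun p hp => ?_, fun l hl => ?_, fun p₁ h₁ p₂ h₂ hne => ?_, fun l₁ h₁ l₂ h₂ hne => ?_⟩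
  · rw [← hpt (f p) (hf.mapsTo hp)]
    exact Nat.card_congr (Equiv.subtypeEquivRight fun l => and_congr_right fun _ => hI p hp l)
  · rw [← hln l hl]
    have hfl : Set.BijOn f {p | p ∈ pts' ∧ I' p l} {p | p ∈ pts ∧ I p l} := by
      refine ⟨fun p ⟨hp, hpl⟩ => ⟨hf.mapsTo hp, (hI p hp l).mp hpl⟩,
        hf.injOn.mono fun _ => And.left, fun p ⟨hp, hpl⟩ => ?_⟩
      obtain ⟨p', hp', rfl⟩ := hf.surjOn hp
      exact ⟨p', ⟨hp', (hI p' hp' l).mpr hpl⟩, rfl⟩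
    exact Nat.card_congr (hfl.equiv f)
  · obtain ⟨l, ⟨hl, hl₁, hl₂⟩, huniq⟩ :=
      hpp (f p₁) (hf.mapsTo h₁) (f p₂) (hf.mapsTo h₂) (hf.injOn.ne h₁ h₂ hne)
    refine ⟨l, ⟨hl, (hI p₁ h₁ l).mpr hl₁, (hI p₂ h₂ l).mpr hl₂⟩, ?_⟩
    rintro l' ⟨hl', hl'₁, hl'₂⟩
    exact huniq l' ⟨hl', (hI p₁ h₁ l').mp hl'₁, (hI p₂ h₂ l').mp hl'₂⟩
  · obtain ⟨p, ⟨hp, hp₁, hp₂⟩, huniq⟩ := hll l₁ h₁ l₂ h₂ hne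
    obtain ⟨p', hp', rfl⟩ := hf.surjOn hp
    refine ⟨p', ⟨hp', (hI p' hp' l₁).mpr hp₁, (hI p' hp' l₂).mpr hp₂⟩, ?_⟩
    rintro p'' ⟨hp'', hp''₁, hp''₂⟩
    exact hf.injOn hp'' hp'
      (huniq _ ⟨hf.mapsTo hp'', (hI p'' hp'' l₁).mp hp''₁, (hI p'' hp'' l₂).mp hp''₂⟩)

section Bundle

variable {P C : Type*} {V : C → P → Prop} {B : Finset C}

theorem natCard_subtype_mem_and (s : Finset C) (p : C → Prop) [DecidablePred p] :
    Nat.card {c // c ∈ s ∧ p c} = (s.filter p).card := by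
  rw [← Nat.card_eq_finsetCard]
  exact Nat.card_congr (Equiv.subtypeEquivRight fun c => Finset.mem_filter.symm)

theorem natCard_vanish_eq_of_orbit {f : P → P} {g : C → C} (hf : Bijective f)
    (hV : ∀ c p, V (g c) (f p) ↔ V c p) (htrans : ∀ c₁ ∈ B, ∀ c₂ ∈ B, ∃ k, g^[k] c₁ = c₂) :
    ∀ c₁ ∈ B, ∀ c₂ ∈ B, Nat.card {p // V c₁ p} = Nat.card {p // V c₂ p} := by
  intro c₁ h₁ c₂ h₂
  obtain ⟨k, rfl⟩ := htrans c₁ h₁ c₂ h₂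
  exact Nat.card_congr ((Equiv.ofBijective _ (hf.iterate k)).subtypeEquiv
    fun p => (iterate_rel_iff hV k c₁ p).symm)

theorem natCard_vanish_eq_of_double_count [Finite P] {r : ℕ} (hcard : Nat.card P = B.card)
    (hpt : ∀ p, Nat.card {c // c ∈ B ∧ V c p} = r)
    (hconst : ∀ c₁ ∈ B, ∀ c₂ ∈ B, Nat.card {p // V c₁ p} = Nat.card {p // V c₂ p})
    {c : C} (hc : c ∈ B) : Nat.card {p // V c p} = r := by
  classical
  have := Fintype.ofFinite P
  have hsum := Finset.sum_card_bipartiteAbove_eq_sum_card_bipartiteBelow (s := B)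
    (t := Finset.univ) V
  simp only [Finset.bipartiteAbove, Finset.bipartiteBelow, ← natCard_subtype_mem_and, hpt,
    Finset.mem_univ, true_and] at hsum
  rw [Finset.sum_congr rfl fun c' hc' => hconst c' hc' c hc, Finset.sum_const, Finset.sum_const,
    Finset.card_univ, ← Nat.card_eq_fintype_card, hcard, smul_eq_mul, smul_eq_mul] at hsum
  exact Nat.eq_of_mul_eq_mul_left (Finset.card_pos.mpr ⟨c, hc⟩) hsum


theorem exists_mem_vanish_vanish_of_ne [Finite P] {q : ℕ} (hP : Nat.card P = q ^ 2 + q + 1)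
    (hpt : ∀ p, Nat.card {c // c ∈ B ∧ V c p} = q + 1)
    (hblock : ∀ c ∈ B, Nat.card {p // V c p} = q + 1)
    (hmeet : ∀ c₁ ∈ B, ∀ c₂ ∈ B, c₁ ≠ c₂ → {p | V c₁ p ∧ V c₂ p}.Subsingleton)
    {p₁ p₂ : P} (hne : p₁ ≠ p₂) : ∃ c ∈ B, V c p₁ ∧ V c p₂ := by
  classical
  have := Fintype.ofFinite P
  -- the `q + 1` blocks through `p₁` have `q` further points each, and no further point in
  -- common, so they cover all `(q + 1) q + 1` points
  let others (c : C) : Finset P := (Finset.univ.filter (V c)).erase p₁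
  have hothers : ∀ c ∈ B.filter (V · p₁), (others c).card = q := by
    intro c hc
    obtain ⟨hcB, hcp₁⟩ := Finset.mem_filter.mp hc
    have := hblock c hcB
    rw [Nat.card_eq_fintype_card, Fintype.card_subtype] at this
    rw [Finset.card_erase_of_mem (by simpa using hcp₁), this, Nat.add_sub_cancel]
  have hdisj : (B.filter (V · p₁) : Set C).PairwiseDisjoint others := by
    intro c hc c' hc' hcc'
    rw [Finset.coe_filter] at hc hc'
    refine Finset.disjoint_left.mpr fun p hp hp' => ?_
    simp only [others, Finset.mem_erase, Finset.mem_filter, Finset.mem_univ, true_and] at hp hp'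
    exact hp.1 (hmeet c hc.1 c' hc'.1 hcc' ⟨hp.2, hp'.2⟩ ⟨hc.2, hc'.2⟩)
  have hcover : insert p₁ ((B.filter (V · p₁)).biUnion others) = Finset.univ := by
    refine Finset.eq_univ_of_card _ ?_
    rw [Finset.card_insert_of_notMem (by simp [others]), Finset.card_biUnion hdisj,
      Finset.sum_congr rfl hothers, Finset.sum_const, smul_eq_mul, ← natCard_subtype_mem_and,
      hpt, ← Nat.card_eq_fintype_card, hP]
    ring
  have hp₂ := hcover ▸ Finset.mem_univ p₂
  simp only [Finset.mem_insert, hne.symm, false_or, Finset.mem_biUnion, Finset.mem_filter,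
    others, Finset.mem_erase, Finset.mem_univ, true_and] at hp₂
  obtain ⟨c, ⟨hcB, hcp₁⟩, -, hcp₂⟩ := hp₂
  exact ⟨c, hcB, hcp₁, hcp₂⟩

theorem isProjectivePlaneOfOrder_of_existsUnique_meet [Finite P] {q : ℕ}
    (hP : Nat.card P = q ^ 2 + q + 1) (hB : B.card = q ^ 2 + q + 1)
    (hpt : ∀ p, Nat.card {c // c ∈ B ∧ V c p} = q + 1)
    (hmeet : ∀ c₁ ∈ B, ∀ c₂ ∈ B, c₁ ≠ c₂ → ∃! p, V c₁ p ∧ V c₂ p)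
    (hconst : ∀ c₁ ∈ B, ∀ c₂ ∈ B, Nat.card {p // V c₁ p} = Nat.card {p // V c₂ p}) :
    IsProjectivePlaneOfOrder Set.univ (B : Set C) (fun p c => V c p) q := by
  have hblock : ∀ c ∈ B, Nat.card {p // V c p} = q + 1 :=
    fun c hc => natCard_vanish_eq_of_double_count (hP.trans hB.symm) hpt hconst hc
  have hmeet' : ∀ c₁ ∈ B, ∀ c₂ ∈ B, c₁ ≠ c₂ → {p | V c₁ p ∧ V c₂ p}.Subsingleton :=
    fun c₁ h₁ c₂ h₂ hne _ hp _ hp' => (hmeet c₁ h₁ c₂ h₂ hne).unique hp hp'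
  refine ⟨fun p _ => hpt p, fun c hc => ?_, fun p₁ _ p₂ _ hne => ?_, fun c₁ h₁ c₂ h₂ hne => ?_⟩
  · simpa only [Set.mem_univ, true_and] using hblock c hc
  · obtain ⟨c, hc, hcp₁, hcp₂⟩ := exists_mem_vanish_vanish_of_ne hP hpt hblock hmeet' hne
    refine ⟨c, ⟨hc, hcp₁, hcp₂⟩, fun c' ⟨hc', hc'p₁, hc'p₂⟩ => ?_⟩
    by_contra hcc'
    exact hne (hmeet' c' hc' c hc hcc' ⟨hc'p₁, hcp₁⟩ ⟨hc'p₂, hcp₂⟩)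
  · simpa only [Set.mem_univ, true_and] using hmeet c₁ h₁ c₂ h₂ hne

end Bundle

section BiLine

variable {F : Type*} [Field F]

theorem incPL_iff_orthogonal {l p : ℙ F (Fin 3 → F)} : IncPL l p ↔ l.orthogonal p := by
  refine ⟨fun ⟨u, hu, w, hw, hl, hp, h⟩ => hl ▸ hp ▸ h, fun h => ?_⟩
  induction l with | h u hu =>
  induction p with | h w hw =>
  exact ⟨u, hu, w, hw, rfl, rfl, h⟩

theorem existsUnique_incPL_incPL_of_ne {l₁ l₂ : ℙ F (Fin 3 → F)} (h : l₁ ≠ l₂) :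
    ∃! p, IncPL l₁ p ∧ IncPL l₂ p := by
  classical
  simp only [incPL_iff_orthogonal]
  refine ⟨l₁.cross l₂, ⟨orthogonal_cross_left h, orthogonal_cross_right h⟩, ?_⟩
  induction l₁ with | h u hu =>
  induction l₂ with | h u' hu' =>
  rintro p ⟨h₁, h₂⟩
  induction p with | h w hw =>
  rw [orthogonal_mk] at h₁ h₂
  rw [cross_mk_of_ne hu hu' h, mk_eq_mk_iff_crossProduct_eq_zero,
    cross_cross_eq_smul_sub_smul', dotProduct_comm w, h₁, h₂, zero_smul, zero_smul, sub_zero]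

theorem eq_of_forall_incPL_imp {l l' : ℙ F (Fin 3 → F)}
    (h : ∀ p, IncPL l p → IncPL l' p) : l = l' := by
  simp only [incPL_iff_orthogonal] at h
  induction l with | h u hu =>
  induction l' with | h u' hu' =>
  rw [mk_eq_mk_iff_crossProduct_eq_zero]
  funext i
  -- `w = eᵢ × u` lies on `l`, and `u' ⬝ w` is the `i`-th coordinate of `u × u'`
  set w := crossProduct (Pi.single i 1) u
  have hw : u' ⬝ᵥ w = 0 := by
    by_cases hw0 : w = 0
    · rw [hw0, dotProduct_zero]
    · exact (orthogonal_mk hu' hw0).mp (h _ ((orthogonal_mk hu hw0).mpr (dot_cross_self _ _)))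
  rwa [triple_product_permutation, single_dotProduct, one_mul] at hw

noncomputable def biLineCenter (bl : Finset (ℙ F (Fin 3 → F))) : ℙ F (Fin 3 → F) :=
  Classical.epsilon fun p => ∀ l ∈ bl, IncPL l p

theorem forall_incPL_iff_eq_biLineCenter {bl : Finset (ℙ F (Fin 3 → F))} (hbl : bl.card = 2)
    {p : ℙ F (Fin 3 → F)} : (∀ l ∈ bl, IncPL l p) ↔ p = biLineCenter bl := by
  classical
  obtain ⟨l₁, l₂, hne, rfl⟩ := Finset.card_eq_two.mp hbl
  have hpair : ∀ p, (∀ l ∈ ({l₁, l₂} : Finset _), IncPL l p) ↔ IncPL l₁ p ∧ IncPL l₂ p := by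
    simp
  obtain ⟨p₀, hp₀, huniq⟩ := existsUnique_incPL_incPL_of_ne hne
  have hcenter := Classical.epsilon_spec (p := fun p => ∀ l ∈ ({l₁, l₂} : Finset _), IncPL l p)
    ⟨p₀, (hpair p₀).mpr hp₀⟩
  rw [← biLineCenter, hpair] at hcenter
  rw [hpair]
  exact ⟨fun hp => (huniq p hp).trans (huniq _ hcenter).symm, fun h => h ▸ hcenter⟩

theorem incBC_iff_vanishC_biLineCenter {bl : Finset (ℙ F (Fin 3 → F))} (hbl : bl.card = 2)
    {c : ℙ F (Fin 6 → F)} : IncBC bl c ↔ VanishC c (biLineCenter bl) :=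
  ⟨fun ⟨_, hp, hc⟩ => (forall_incPL_iff_eq_biLineCenter hbl).mp hp ▸ hc,
    fun hc => ⟨_, (forall_incPL_iff_eq_biLineCenter hbl).mpr rfl, hc⟩⟩

variable {f g : ℙ F (Fin 3 → F) → ℙ F (Fin 3 → F)}

theorem iterate_eq_id_of_iterate_eq_id (hfg : ∀ l p, IncPL (g l) (f p) ↔ IncPL l p) {k : ℕ}
    (hk : f^[k] = id) : g^[k] = id := by
  funext l
  refine (eq_of_forall_incPL_imp fun p hp => ?_).symm
  have := (iterate_rel_iff hfg k l p).mpr hp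
  rwa [hk, id] at this

variable [DecidableEq (ℙ F (Fin 3 → F))]

theorem biLineCenter_image (hfg : ∀ l p, IncPL (g l) (f p) ↔ IncPL l p)
    {bl : Finset (ℙ F (Fin 3 → F))} (hbl : bl.card = 2) (hbl' : (bl.image g).card = 2) :
    biLineCenter (bl.image g) = f (biLineCenter bl) := by
  refine ((forall_incPL_iff_eq_biLineCenter hbl').mp ?_).symm
  simp only [Finset.mem_image, forall_exists_index, and_imp]
  rintro _ l hl rfl
  exact (hfg l _).mpr ((forall_incPL_iff_eq_biLineCenter hbl).mpr rfl l hl)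

theorem biLineCenter_injOn {n : ℕ} (hf : IsRegularCycle f n)
    (hfg : ∀ l p, IncPL (g l) (f p) ↔ IncPL l p) {b : Finset (Finset (ℙ F (Fin 3 → F)))}
    (hb : ∀ bl ∈ b, bl.card = 2) (htrans : ∀ bl₁ ∈ b, ∀ bl₂ ∈ b, ∃ k, bl₁.image g^[k] = bl₂) :
    Set.InjOn biLineCenter (b : Set (Finset (ℙ F (Fin 3 → F)))) := by
  intro bl₁ h₁ bl₂ h₂ heq
  obtain ⟨k, rfl⟩ := htrans bl₁ h₁ bl₂ h₂
  have hfix : f^[k] (biLineCenter bl₁) = biLineCenter bl₁ :=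
    (biLineCenter_image (iterate_rel_iff hfg k) (hb bl₁ h₁) (hb _ h₂)).symm.trans heq.symm
  rw [iterate_eq_id_of_iterate_eq_id hfg (hf.iterate_eq_id hfix), Finset.image_id]

theorem biLineCenter_bijOn {n : ℕ} (hf : IsRegularCycle f n)
    (hfg : ∀ l p, IncPL (g l) (f p) ↔ IncPL l p) {b : Finset (Finset (ℙ F (Fin 3 → F)))}
    (hcard : b.card = n) (hb : ∀ bl ∈ b, bl.card = 2)
    (htrans : ∀ bl₁ ∈ b, ∀ bl₂ ∈ b, ∃ k, bl₁.image g^[k] = bl₂) :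
    Set.BijOn biLineCenter (b : Set (Finset (ℙ F (Fin 3 → F)))) Set.univ := by
  have := hf.finite
  have hinj := biLineCenter_injOn hf hfg hb htrans
  refine ⟨Set.mapsTo_univ _ _, hinj, ?_⟩
  rw [Set.SurjOn, Set.univ_subset_iff, Set.eq_univ_iff_ncard, hinj.ncard_image,
    Set.ncard_coe_finset, hcard, hf.natCard_eq]

end BiLine

theorem bundle_biline_projective_plane_general (F : Type*) [Field F]
    [DecidableEq (Projectivization F (Fin 3 → F))]
    (q : ℕ)
    (act actL : Projectivization F (Fin 3 → F) → Projectivization F (Fin 3 → F))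
    (actQ : Projectivization F (Fin 6 → F) → Projectivization F (Fin 6 → F))
    (hcompat : ∀ l p, IncPL (actL l) (act p) ↔ IncPL l p)
    (hactQ : ∀ c p, VanishC (actQ c) (act p) ↔ VanishC c p)
    (hreg : ∀ p p' : Projectivization F (Fin 3 → F),
      ∃! k : ℕ, k < q ^ 2 + q + 1 ∧ act^[k] p = p')
    (B : Finset (Projectivization F (Fin 6 → F)))
    (hBcard : B.card = q ^ 2 + q + 1)
    (hBmeet : ∀ c₁ ∈ B, ∀ c₂ ∈ B, c₁ ≠ c₂ →
      ∃! p : Projectivization F (Fin 3 → F), VanishC c₁ p ∧ VanishC c₂ p)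
    (hBpt : ∀ p : Projectivization F (Fin 3 → F),
      Nat.card {c : Projectivization F (Fin 6 → F) // c ∈ B ∧ VanishC c p} = q + 1)
    (hBtrans : ∀ c₁ ∈ B, ∀ c₂ ∈ B, ∃ k : ℕ, actQ^[k] c₁ = c₂)
    (b : Finset (Finset (Projectivization F (Fin 3 → F))))
    (hbcard : b.card = q ^ 2 + q + 1)
    (hbl : ∀ bl ∈ b, bl.card = 2)
    (hbtrans : ∀ bl₁ ∈ b, ∀ bl₂ ∈ b, ∃ k : ℕ, bl₁.image (actL^[k]) = bl₂) :
    (∀ bl ∈ b,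
      Nat.card {c : Projectivization F (Fin 6 → F) // c ∈ B ∧ IncBC bl c} = q + 1) ∧
    (∀ c ∈ B,
      Nat.card {bl : Finset (Projectivization F (Fin 3 → F)) // bl ∈ b ∧ IncBC bl c}
        = q + 1) ∧
    (∀ bl₁ ∈ b, ∀ bl₂ ∈ b, bl₁ ≠ bl₂ →
      ∃! c : Projectivization F (Fin 6 → F), c ∈ B ∧ IncBC bl₁ c ∧ IncBC bl₂ c) ∧
    (∀ c₁ ∈ B, ∀ c₂ ∈ B, c₁ ≠ c₂ →
      ∃! bl : Finset (Projectivization F (Fin 3 → F)),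
        bl ∈ b ∧ IncBC bl c₁ ∧ IncBC bl c₂) := by
  have hcycle : IsRegularCycle act (q ^ 2 + q + 1) := hreg
  have := hcycle.finite
  have hplane := isProjectivePlaneOfOrder_of_existsUnique_meet hcycle.natCard_eq hBcard hBpt
    hBmeet (natCard_vanish_eq_of_orbit hcycle.bijective hactQ hBtrans)
  exact hplane.comap (biLineCenter_bijOn hcycle hcompat hbcard hbl hbtrans)
    fun bl hbl' _ => incBC_iff_vanishC_biLineCenter (hbl bl hbl')

/-- Let `S` be a Singer cyclic group of PGL(3,q), generated by the
projectivity `act` on points (matrix `M`, acting regularly), with induced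
action `actL` on lines and `actQ` on quadrics.  Let `B` be the circumscribed
bundle invariant under `S`: an `S`-orbit of `q^2+q+1` conics, any two meeting
in exactly one point, with exactly `q+1` conics of `B` through each point.
Let `b` be an `S`-orbit of bi-lines, of size `q^2+q+1`.  Then the incidence
structure with points the bi-lines of `b` and lines the conics of `B`, a
bi-line being incident with a conic when its center lies on the conic, is a
projective plane of order `q`. -/
theorem bundle_biline_projective_plane (F : Type*) [Field F] [Fintype F]
    [DecidableEq (Projectivization F (Fin 3 → F))]
    (q : ℕ) (hq : Fintype.card F = q)
    (M : GL (Fin 3) F)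
    (act actL : Projectivization F (Fin 3 → F) → Projectivization F (Fin 3 → F))
    (actQ : Projectivization F (Fin 6 → F) → Projectivization F (Fin 6 → F))
    (hact : ∀ (v : Fin 3 → F) (hv : v ≠ 0) (hv' : M.val.mulVec v ≠ 0),
      act (Projectivization.mk F v hv) = Projectivization.mk F (M.val.mulVec v) hv')
    (hactL : ∀ (u : Fin 3 → F) (hu : u ≠ 0)
      (hu' : ((M⁻¹ : GL (Fin 3) F).val.transpose).mulVec u ≠ 0),
      actL (Projectivization.mk F u hu) =
        Projectivization.mk F (((M⁻¹ : GL (Fin 3) F).val.transpose).mulVec u) hu')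
    (hcompat : ∀ l p, IncPL (actL l) (act p) ↔ IncPL l p)
    (hactQ : ∀ c p, VanishC (actQ c) (act p) ↔ VanishC c p)
    (hreg : ∀ p p' : Projectivization F (Fin 3 → F),
      ∃! k : ℕ, k < q ^ 2 + q + 1 ∧ act^[k] p = p')
    (B : Finset (Projectivization F (Fin 6 → F)))
    (hBcard : B.card = q ^ 2 + q + 1)
    (hBconic : ∀ c ∈ B, ConicC c)
    (hBmeet : ∀ c₁ ∈ B, ∀ c₂ ∈ B, c₁ ≠ c₂ →
      ∃! p : Projectivization F (Fin 3 → F), VanishC c₁ p ∧ VanishC c₂ p)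
    (hBpt : ∀ p : Projectivization F (Fin 3 → F),
      Nat.card {c : Projectivization F (Fin 6 → F) // c ∈ B ∧ VanishC c p} = q + 1)
    (hBinv : ∀ c ∈ B, actQ c ∈ B)
    (hBtrans : ∀ c₁ ∈ B, ∀ c₂ ∈ B, ∃ k : ℕ, actQ^[k] c₁ = c₂)
    (b : Finset (Finset (Projectivization F (Fin 3 → F))))
    (hbcard : b.card = q ^ 2 + q + 1)
    (hbl : ∀ bl ∈ b, bl.card = 2)
    (hbinv : ∀ bl ∈ b, bl.image actL ∈ b)
    (hbtrans : ∀ bl₁ ∈ b, ∀ bl₂ ∈ b, ∃ k : ℕ, bl₁.image (actL^[k]) = bl₂) :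
    (∀ bl ∈ b,
      Nat.card {c : Projectivization F (Fin 6 → F) // c ∈ B ∧ IncBC bl c} = q + 1) ∧
    (∀ c ∈ B,
      Nat.card {bl : Finset (Projectivization F (Fin 3 → F)) // bl ∈ b ∧ IncBC bl c}
        = q + 1) ∧
    (∀ bl₁ ∈ b, ∀ bl₂ ∈ b, bl₁ ≠ bl₂ →
      ∃! c : Projectivization F (Fin 6 → F), c ∈ B ∧ IncBC bl₁ c ∧ IncBC bl₂ c) ∧
    (∀ c₁ ∈ B, ∀ c₂ ∈ B, c₁ ≠ c₂ →
      ∃! bl : Finset (Projectivization F (Fin 3 → F)),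
        bl ∈ b ∧ IncBC bl c₁ ∧ IncBC bl c₂) :=
  bundle_biline_projective_plane_general F q act actL actQ hcompat hactQ hreg B hBcard hBmeet hBpt
    hBtrans b hbcard hbl hbtrans
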